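/- arXiv:1508.03310 — 10 statements merged into one kernel-verified Lean document; each statement's English description precedes it below -/
import Mathlib

section
/- A function F : X* → X* is associative if and only if it is preassociative and satisfies F ∘ F = F. -/
namespace VariadicFun

variable {X : Type*}

def IsAssociative (F : List X → List X) : Prop :=
  ∀ x y z : List X, F (x ++ y ++ z) = F (x ++ F y ++ z)

def IsPreassociative (F : List X → List X) : Prop :=
  ∀ x y y' z : List X, F y = F y' → F (x ++ y ++ z) = F (x ++ y' ++ z)

variable {F : List X → List X}

theorem IsAssociative.isPreassociative (hF : IsAssociative F) : IsPreassociative F :=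
  fun x y y' z h => by rw [hF x y z, h, ← hF x y' z]

theorem IsAssociative.comp_self (hF : IsAssociative F) : F ∘ F = F :=
  funext fun y => by simpa using (hF [] y []).symm

theorem IsPreassociative.isAssociative (hF : IsPreassociative F) (hFF : F ∘ F = F) :
    IsAssociative F :=
  fun x y z => (hF x (F y) y z (congrFun hFF y)).symm

end VariadicFun

theorem stmt_2 {X : Type*} (F : List X → List X) :
    (∀ x y z : List X, F (x ++ y ++ z) = F (x ++ F y ++ z)) ↔
      ((∀ x y y' z : List X, F y = F y' → F (x ++ y ++ z) = F (x ++ y' ++ z)) ∧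
        F ∘ F = F) :=
  ⟨fun hA => ⟨VariadicFun.IsAssociative.isPreassociative hA,
      VariadicFun.IsAssociative.comp_self hA⟩,
    fun ⟨hP, hFF⟩ => VariadicFun.IsPreassociative.isAssociative hP hFF⟩
end

section
/- Let D be a nonempty subset of X* and F : X* → X* with F(D) ⊆ D. If F is in P_D and satisfies F(F(y)) = F(y) for all y ∈ D, then F is in A_D. -/
theorem stmt_4_general {X : Type*} (D : Set (List X)) (F : List X → List X)
    (hFD : F '' D ⊆ D)
    (hP : ∀ x z : List X, ∀ y ∈ D, ∀ y' ∈ D,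
      F y = F y' → F (x ++ y ++ z) = F (x ++ y' ++ z))
    (hidem : ∀ y ∈ D, F (F y) = F y) :
    ∀ x z : List X, ∀ y ∈ D, F (x ++ y ++ z) = F (x ++ F y ++ z) :=
  fun x z y hy => hP x z y hy (F y) (hFD ⟨y, hy, rfl⟩) (hidem y hy).symm

theorem stmt_4 {X : Type*} (D : Set (List X)) (hD : D.Nonempty) (F : List X → List X)
    (hFD : F '' D ⊆ D)
    (hP : ∀ x z : List X, ∀ y ∈ D, ∀ y' ∈ D,
      F y = F y' → F (x ++ y ++ z) = F (x ++ y' ++ z))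
    (hidem : ∀ y ∈ D, F (F y) = F y) :
    ∀ x z : List X, ∀ y ∈ D, F (x ++ y ++ z) = F (x ++ F y ++ z) :=
  stmt_4_general D F hFD hP hidem
end

section
/- Let D be a nonempty subset of X* and F : X* → X*. Then F is in A'_D if and only if F is in P'_D and satisfies F(F(y)) = F(y) for all y ∈ D. -/
/-! If `F` may replace any factor `y` with `F y ∈ F '' D` by `F y`, then two `F`-equivalent
factors are both interchangeable with their common image, hence with each other; and taking
the empty context gives idempotence on `D`. Conversely, for `F y = F d` with `d ∈ D`,
idempotence gives `F (F y) = F d`, so both `y` and `F y` may be exchanged with `d`. -/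

namespace WordFunction

variable {X : Type*} (D : Set (List X)) (F : List X → List X)

/-- The class `A'_D`. -/
def ClassA' : Prop :=
  ∀ x z y : List X, F y ∈ F '' D → F (x ++ y ++ z) = F (x ++ F y ++ z)

/-- The class `P'_D`. -/
def ClassP' : Prop :=
  ∀ x z : List X, ∀ y ∈ D, ∀ y' : List X, F y = F y' → F (x ++ y ++ z) = F (x ++ y' ++ z)

variable {D F}

theorem ClassA'.classP' (hA : ClassA' D F) : ClassP' D F := by
  intro x z y hy y' hyy'
  rw [hA x z y ⟨y, hy, rfl⟩, hA x z y' ⟨y, hy, hyy'⟩, hyy']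

theorem ClassA'.map_map_eq (hA : ClassA' D F) {y : List X} (hy : y ∈ D) : F (F y) = F y := by
  simpa using (hA [] [] y ⟨y, hy, rfl⟩).symm

theorem ClassP'.classA' (hP : ClassP' D F) (hidem : ∀ y ∈ D, F (F y) = F y) :
    ClassA' D F := by
  rintro x z y ⟨d, hd, hdy⟩
  calc F (x ++ y ++ z) = F (x ++ d ++ z) := (hP x z d hd y hdy).symm
    _ = F (x ++ F y ++ z) := hP x z d hd (F y) (by rw [← hdy, hidem d hd])

theorem classA'_iff : ClassA' D F ↔ ClassP' D F ∧ ∀ y ∈ D, F (F y) = F y :=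
  ⟨fun hA => ⟨hA.classP', fun _ hy => hA.map_map_eq hy⟩,
    fun ⟨hP, hidem⟩ => hP.classA' hidem⟩

end WordFunction

theorem stmt_5_general {X : Type*} (D : Set (List X)) (F : List X → List X) :
    (∀ x z y : List X, F y ∈ F '' D → F (x ++ y ++ z) = F (x ++ F y ++ z)) ↔
      ((∀ x z : List X, ∀ y ∈ D, ∀ y' : List X,
          F y = F y' → F (x ++ y ++ z) = F (x ++ y' ++ z)) ∧
        (∀ y ∈ D, F (F y) = F y)) :=
  WordFunction.classA'_iff

theorem stmt_5 {X : Type*} (D : Set (List X)) (hD : D.Nonempty) (F : List X → List X) :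
    (∀ x z y : List X, F y ∈ F '' D → F (x ++ y ++ z) = F (x ++ F y ++ z)) ↔
      ((∀ x z : List X, ∀ y ∈ D, ∀ y' : List X,
          F y = F y' → F (x ++ y ++ z) = F (x ++ y' ++ z)) ∧
        (∀ y ∈ D, F (F y) = F y)) :=
  stmt_5_general D F
end

section
/- If a function F : X* → Y is in P'_D for some nonempty D ⊆ X* and F has a D-determined range (i.e., ran(F) = F(D)), then F is preassociative: for all x, y, y', z ∈ X*, F(y) = F(y') implies F(xyz) = F(xy'z). -/
theorem Function.factorsThrough_of_range_eq_image {α β γ : Type*} {f : α → β} {g : α → γ}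
    {s : Set α} (hs : Set.range f = f '' s) (h : ∀ a ∈ s, ∀ b, f a = f b → g a = g b) :
    g.FactorsThrough f := by
  intro b b' hb
  obtain ⟨a, ha, hab⟩ : f b ∈ f '' s := hs ▸ Set.mem_range_self b
  exact (h a ha b hab).symm.trans (h a ha b' (hab.trans hb))

theorem stmt_6_general {X Y : Type*} (D : Set (List X))
    (F : List X → Y)
    (hP : ∀ x z : List X, ∀ y ∈ D, ∀ y' : List X,
      F y = F y' → F (x ++ y ++ z) = F (x ++ y' ++ z))
    (hran : Set.range F = F '' D) :
    ∀ x y y' z : List X, F y = F y' → F (x ++ y ++ z) = F (x ++ y' ++ z) := by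
  intro x y y' z
  exact Function.factorsThrough_of_range_eq_image hran (hP x z) (a := y) (b := y')

theorem stmt_6 {X Y : Type*} [Nonempty Y] (D : Set (List X)) (hD : D.Nonempty)
    (F : List X → Y)
    (hP : ∀ x z : List X, ∀ y ∈ D, ∀ y' : List X,
      F y = F y' → F (x ++ y ++ z) = F (x ++ y' ++ z))
    (hran : Set.range F = F '' D) :
    ∀ x y y' z : List X, F y = F y' → F (x ++ y ++ z) = F (x ++ y' ++ z) :=
  stmt_6_general D F hP hran
end

section
/- (Assuming choice) A function F : X* → Y is in P_D if and only if there exist H ∈ A_D with H(D) ⊆ D and a one-to-one function f : ran(H) → Y such that F = f ∘ H. -/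
/-! If `F` respects `D`-substitutions, pick a right inverse `g` of `F` on its range sending
`F '' D` back into `D`; then `H = g ∘ F` is a `D`-rewriting (a substitution of `y ∈ D` by `H y ∈ D` does not change
`F`, which determines `H`) and `F = F ∘ H` with `F` injective on `ran H`. Conversely, if `F = f ∘ H`
then `F y = F y'` forces `H y = H y'` by injectivity, and both sides rewrite to the same word. -/

theorem exists_rightInvOn_range_mapsTo {α β : Type*} [Nonempty α] (F : α → β) (D : Set α) :
    ∃ g : β → α, (∀ a, F (g (F a)) = F a) ∧ Set.MapsTo g (F '' D) D := by
  have hchoice : ∀ b : β, ∃ a : α, (b ∈ Set.range F → F a = b) ∧ (b ∈ F '' D → a ∈ D) := by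
    intro b
    by_cases hD : b ∈ F '' D
    · obtain ⟨a, ha, rfl⟩ := hD
      exact ⟨a, fun _ => rfl, fun _ => ha⟩
    by_cases hF : b ∈ Set.range F
    · obtain ⟨a, rfl⟩ := hF
      exact ⟨a, fun _ => rfl, fun h => absurd h hD⟩
    · exact ⟨Classical.arbitrary α, fun h => absurd h hF, fun h => absurd h hD⟩
  choose g hgF hgD using hchoice
  exact ⟨g, fun a => hgF _ ⟨a, rfl⟩, fun b hb => hgD b hb⟩

theorem stmt_12_general {X Y : Type*} (D : Set (List X))
    (F : List X → Y) :
    (∀ x z : List X, ∀ y ∈ D, ∀ y' ∈ D,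
        F y = F y' → F (x ++ y ++ z) = F (x ++ y' ++ z)) ↔
      (∃ (H : List X → List X) (f : List X → Y),
        (∀ x z : List X, ∀ y ∈ D, H (x ++ y ++ z) = H (x ++ H y ++ z)) ∧
        H '' D ⊆ D ∧ Set.InjOn f (Set.range H) ∧ F = f ∘ H) := by
  constructor
  · intro hP
    obtain ⟨g, hgF, hgD⟩ := exists_rightInvOn_range_mapsTo F D
    refine ⟨g ∘ F, F, fun x z y hy => ?_, ?_, ?_, funext fun w => (hgF w).symm⟩
    · simp only [Function.comp_apply, hP x z y hy _ (hgD ⟨y, hy, rfl⟩) (hgF y).symm]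
    · rintro _ ⟨y, hy, rfl⟩
      exact hgD ⟨y, hy, rfl⟩
    · rintro _ ⟨w, rfl⟩ _ ⟨w', rfl⟩ h
      simp only [Function.comp_apply, hgF] at h
      simp only [Function.comp_apply, h]
  · rintro ⟨H, f, hH, -, hf, rfl⟩ x z y hy y' hy' hF
    simp only [Function.comp_apply, hH x z y hy, hH x z y' hy', hf ⟨y, rfl⟩ ⟨y', rfl⟩ hF]

theorem stmt_12 {X Y : Type*} [Nonempty Y] (D : Set (List X)) (hD : D.Nonempty)
    (F : List X → Y) :
    (∀ x z : List X, ∀ y ∈ D, ∀ y' ∈ D,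
        F y = F y' → F (x ++ y ++ z) = F (x ++ y' ++ z)) ↔
      (∃ (H : List X → List X) (f : List X → Y),
        (∀ x z : List X, ∀ y ∈ D, H (x ++ y ++ z) = H (x ++ H y ++ z)) ∧
        H '' D ⊆ D ∧ Set.InjOn f (Set.range H) ∧ F = f ∘ H) :=
  stmt_12_general D F
end

section
/- (Assuming choice) A function F : X* → Y is in P'_D if and only if there exist H ∈ A'_D with H ∘ H = H and a one-to-one function f : ran(H) → Y such that F = f ∘ H. -/
/-!
For `F ∈ P'_D`, pick a representative of each fibre of `F` and let `H x` be the representative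
of the fibre of `x`; then `F = F ∘ H` with `F` injective on the representatives, `H` is
idempotent, and the congruence property of `F` transfers to `H` because `H a = H b ↔ F a = F b`.
Conversely, composing an `H ∈ A'_D` with a map injective on `ran H` yields a function in `P'_D`,
since `H (x ++ y ++ z)` only depends on `H y` when `y ∈ D`.
-/

open Function

section

variable {X Y : Type*}

/-- The class `P'_D`. -/
def IsCongrOn (D : Set (List X)) (F : List X → Y) : Prop :=
  ∀ x z : List X, ∀ y ∈ D, ∀ y' : List X, F y = F y' → F (x ++ y ++ z) = F (x ++ y' ++ z)

/-- The class `A'_D`. -/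
def IsReduction (D : Set (List X)) (H : List X → List X) : Prop :=
  ∀ x z y : List X, H y ∈ H '' D → H (x ++ y ++ z) = H (x ++ H y ++ z)

theorem IsReduction.isCongrOn_comp {D : Set (List X)} {H : List X → List X} {f : List X → Y}
    (hH : IsReduction D H) (hf : Set.InjOn f (Set.range H)) : IsCongrOn D (f ∘ H) := by
  intro x z y hy y' hyy'
  have hHyy' : H y = H y' := hf ⟨y, rfl⟩ ⟨y', rfl⟩ hyy'
  have hy' : H y' ∈ H '' D := ⟨y, hy, hHyy'⟩
  simp only [comp_apply, hH x z y ⟨y, hy, rfl⟩, hH x z y' hy', hHyy']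

noncomputable def fibreRep (F : List X → Y) : List X → List X :=
  invFun F ∘ F

theorem apply_fibreRep (F : List X → Y) (x : List X) : F (fibreRep F x) = F x :=
  invFun_eq ⟨x, rfl⟩

theorem fibreRep_eq_fibreRep_iff {F : List X → Y} {a b : List X} :
    fibreRep F a = fibreRep F b ↔ F a = F b :=
  ⟨fun h => by rw [← apply_fibreRep F a, h, apply_fibreRep F b], fun h => congrArg (invFun F) h⟩

theorem comp_fibreRep (F : List X → Y) : F ∘ fibreRep F = F :=
  funext (apply_fibreRep F)

theorem fibreRep_comp_self (F : List X → Y) : fibreRep F ∘ fibreRep F = fibreRep F :=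
  funext fun x => fibreRep_eq_fibreRep_iff.2 (apply_fibreRep F x)

theorem injOn_range_fibreRep (F : List X → Y) : Set.InjOn F (Set.range (fibreRep F)) := by
  rintro _ ⟨a, rfl⟩ _ ⟨b, rfl⟩ hab
  rwa [fibreRep_eq_fibreRep_iff, ← apply_fibreRep F a, ← apply_fibreRep F b]

theorem IsCongrOn.isReduction_fibreRep {D : Set (List X)} {F : List X → Y}
    (hF : IsCongrOn D F) : IsReduction D (fibreRep F) := by
  rintro x z y ⟨d, hd, hdy⟩
  rw [fibreRep_eq_fibreRep_iff] at hdy ⊢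
  have hdHy : F d = F (fibreRep F y) := hdy.trans (apply_fibreRep F y).symm
  exact (hF x z d hd y hdy).symm.trans (hF x z d hd _ hdHy)

end

theorem stmt_13_general {X Y : Type*} (D : Set (List X))
    (F : List X → Y) :
    (∀ x z : List X, ∀ y ∈ D, ∀ y' : List X,
        F y = F y' → F (x ++ y ++ z) = F (x ++ y' ++ z)) ↔
      (∃ (H : List X → List X) (f : List X → Y),
        (∀ x z y : List X, H y ∈ H '' D → H (x ++ y ++ z) = H (x ++ H y ++ z)) ∧
        H ∘ H = H ∧ Set.InjOn f (Set.range H) ∧ F = f ∘ H) := by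
  constructor
  · intro hF
    exact ⟨fibreRep F, F, IsCongrOn.isReduction_fibreRep hF, fibreRep_comp_self F,
      injOn_range_fibreRep F, (comp_fibreRep F).symm⟩
  · rintro ⟨H, f, hH, -, hf, rfl⟩
    exact IsReduction.isCongrOn_comp hH hf

theorem stmt_13 {X Y : Type*} [Nonempty Y] (D : Set (List X)) (hD : D.Nonempty)
    (F : List X → Y) :
    (∀ x z : List X, ∀ y ∈ D, ∀ y' : List X,
        F y = F y' → F (x ++ y ++ z) = F (x ++ y' ++ z)) ↔
      (∃ (H : List X → List X) (f : List X → Y),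
        (∀ x z y : List X, H y ∈ H '' D → H (x ++ y ++ z) = H (x ++ H y ++ z)) ∧
        H ∘ H = H ∧ Set.InjOn f (Set.range H) ∧ F = f ∘ H) :=
  stmt_13_general D F
end

section
/- (Assuming choice) A function F : X* → Y is preassociative and has a D-determined range (ran(F) = F(D)) if and only if there exist an associative D-valued function H : X* → X* and a one-to-one function f : ran(H) → Y such that F = f ∘ H. -/
/-!
If `F = f ∘ H` with `H` associative and `f` injective on `ran H`, then `F y = F y'` forces
`H y = H y'`, and associativity lets `H` absorb the middle factor, giving preassociativity;
idempotence `H (H x) = H x` with `H x ∈ D` gives `ran F = F(D)`. Conversely, choosing for each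
value `F x` a preimage in `D` (possible as `ran F = F(D)`) yields a `D`-valued `H` with
`F ∘ H = F`; preassociativity of `F` then makes `H` associative, and `F` is injective on `ran H`
because `H` factors through `F`.
-/

open Set Function

section

variable {X Y : Type*}

def Preassociative (F : List X → Y) : Prop :=
  ∀ x y y' z : List X, F y = F y' → F (x ++ y ++ z) = F (x ++ y' ++ z)

def IsAssociative (H : List X → List X) : Prop :=
  ∀ x y z : List X, H (x ++ y ++ z) = H (x ++ H y ++ z)

namespace IsAssociative

variable {H : List X → List X}

theorem apply_apply (hH : IsAssociative H) (y : List X) : H (H y) = H y := by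
  simpa using (hH [] y []).symm

theorem preassociative_comp (hH : IsAssociative H) {f : List X → Y}
    (hf : InjOn f (range H)) : Preassociative (f ∘ H) := by
  intro x y y' z hyy'
  have hHyy' : H y = H y' := hf (mem_range_self y) (mem_range_self y') hyy'
  simp only [comp_apply, hH x y z, hH x y' z, hHyy']

theorem range_comp_eq_image (hH : IsAssociative H) {D : Set (List X)} (hHD : range H ⊆ D)
    (f : List X → Y) : range (f ∘ H) = (f ∘ H) '' D := by
  refine (image_subset_range _ _).antisymm' ?_
  rintro _ ⟨x, rfl⟩
  exact ⟨H x, hHD (mem_range_self x), by simp only [comp_apply, hH.apply_apply]⟩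

end IsAssociative

theorem injOn_range_comp_of_apply_comp_apply {α β : Type*} {F : α → β} {g : β → α}
    (hg : ∀ x, F (g (F x)) = F x) : InjOn F (range (g ∘ F)) := by
  rintro _ ⟨a, rfl⟩ _ ⟨b, rfl⟩ hab
  simp only [comp_apply, hg] at hab ⊢
  rw [hab]

namespace Preassociative

variable {F : List X → Y}

theorem isAssociative_comp (hF : Preassociative F) {g : Y → List X}
    (hg : ∀ x, F (g (F x)) = F x) : IsAssociative (g ∘ F) := by
  intro x y z
  simp only [comp_apply, hF x y (g (F y)) z (hg y).symm]

theorem exists_factorization (hF : Preassociative F) {D : Set (List X)}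
    (hran : range F = F '' D) :
    ∃ (H : List X → List X) (f : List X → Y), IsAssociative H ∧ range H ⊆ D ∧
      InjOn f (range H) ∧ F = f ∘ H := by
  have hD : ∀ x, ∃ d ∈ D, F d = F x := fun x => (hran ▸ mem_range_self x : F x ∈ F '' D)
  have hg : ∀ x, F (invFunOn F D (F x)) = F x := fun x => invFunOn_eq (hD x)
  refine ⟨invFunOn F D ∘ F, F, hF.isAssociative_comp hg, ?_,
    injOn_range_comp_of_apply_comp_apply hg, funext fun x => (hg x).symm⟩
  rintro _ ⟨x, rfl⟩
  exact invFunOn_mem (hD x)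

end Preassociative

end

theorem stmt_14_general {X Y : Type*} (D : Set (List X))
    (F : List X → Y) :
    ((∀ x y y' z : List X, F y = F y' → F (x ++ y ++ z) = F (x ++ y' ++ z)) ∧
        Set.range F = F '' D) ↔
      (∃ (H : List X → List X) (f : List X → Y),
        (∀ x y z : List X, H (x ++ y ++ z) = H (x ++ H y ++ z)) ∧
        Set.range H ⊆ D ∧ Set.InjOn f (Set.range H) ∧ F = f ∘ H) := by
  constructor
  · rintro ⟨hF, hran⟩
    exact Preassociative.exists_factorization hF hran
  · rintro ⟨H, f, hH, hHD, hf, rfl⟩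
    exact ⟨IsAssociative.preassociative_comp hH hf, IsAssociative.range_comp_eq_image hH hHD f⟩

theorem stmt_14 {X Y : Type*} [Nonempty Y] (D : Set (List X)) (hD : D.Nonempty)
    (F : List X → Y) :
    ((∀ x y y' z : List X, F y = F y' → F (x ++ y ++ z) = F (x ++ y' ++ z)) ∧
        Set.range F = F '' D) ↔
      (∃ (H : List X → List X) (f : List X → Y),
        (∀ x y z : List X, H (x ++ y ++ z) = H (x ++ H y ++ z)) ∧
        Set.range H ⊆ D ∧ Set.InjOn f (Set.range H) ∧ F = f ∘ H) :=
  stmt_14_general D F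
end

section
/- If g is a quasi-inverse of f, then g restricted to ran(f) is one-to-one, and f is a quasi-inverse of g. -/
theorem stmt_16 {α β : Type*} (f : α → β) (g : β → α)
    (h1 : ∀ y ∈ Set.range f, f (g y) = y)
    (h2 : g '' Set.range f = Set.range g) :
    Set.InjOn g (Set.range f) ∧
      ((∀ x ∈ Set.range g, g (f x) = x) ∧ f '' Set.range g = Set.range f) := by
  have hinv : Set.LeftInvOn f g (Set.range f) := h1
  rw [← h2]
  exact ⟨hinv.injOn, hinv.rightInvOn_image, hinv.image_image⟩
end

section
/- Let m ≥ 0 and D_m = {x ∈ X* : |x| ≤ m}. Let F : X* → Y be in P'_{D_m}. Then ran(F restricted to X^{m+1}) ⊆ ⋃_{k=0}^m ran(F restricted to X^k) if and only if ran(F) = ⋃_{k=0}^m ran(F restricted to X^k). -/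
/-!
If every value of `F` on words of length `m + 1` is already taken on a word of length at most
`m`, then any word `w` longer than `m` can be shortened without changing `F w`: replace its
suffix `y'` of length `m + 1` by a word `v` of length at most `m` with `F v = F y'`, which is
allowed because `F` is a congruence with respect to prepending a prefix on pairs `v, y'` with
`|v| ≤ m`. Induction on the length then shows that every value of `F` is taken on `D_m`.
-/

namespace List

variable {X Y : Type*}

theorem biUnion_image_length_eq (F : List X → Y) (m : ℕ) :
    ⋃ k ≤ m, F '' {x : List X | x.length = k} = F '' {x : List X | x.length ≤ m} := by
  ext
  simp

variable {m : ℕ} {F : List X → Y}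

theorem exists_length_lt_apply_eq
    (hF : ∀ x y y' : List X, y.length ≤ m → F y = F y' → F (x ++ y) = F (x ++ y'))
    (h : F '' {x | x.length = m + 1} ⊆ F '' {x | x.length ≤ m})
    {w : List X} (hw : m < w.length) :
    ∃ w' : List X, w'.length < w.length ∧ F w' = F w := by
  set n := w.length - (m + 1)
  obtain ⟨v, hv, hFv⟩ : F (w.drop n) ∈ F '' {x | x.length ≤ m} :=
    h ⟨w.drop n, by simp only [Set.mem_ofPred_eq, length_drop]; omega, rfl⟩
  refine ⟨w.take n ++ v, ?_, ?_⟩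
  · simp only [Set.mem_ofPred_eq] at hv
    simp only [length_append, length_take]
    omega
  · rw [hF _ _ _ hv hFv, take_append_drop]

theorem range_subset_image_length_le
    (hF : ∀ x y y' : List X, y.length ≤ m → F y = F y' → F (x ++ y) = F (x ++ y'))
    (h : F '' {x | x.length = m + 1} ⊆ F '' {x | x.length ≤ m}) :
    Set.range F ⊆ F '' {x | x.length ≤ m} := by
  rintro _ ⟨w, rfl⟩
  induction hn : w.length using Nat.strong_induction_on generalizing w with
  | _ n ih =>
    by_cases hw : w.length ≤ m
    · exact ⟨w, hw, rfl⟩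
    · obtain ⟨w', hlt, hFw'⟩ := exists_length_lt_apply_eq hF h (not_le.mp hw)
      exact hFw' ▸ ih _ (hn ▸ hlt) w' rfl

end List

theorem stmt_17_general {X Y : Type*} (m : ℕ) (F : List X → Y)
    (hP : ∀ x z : List X, ∀ y : List X, y.length ≤ m → ∀ y' : List X,
      F y = F y' → F (x ++ y ++ z) = F (x ++ y' ++ z)) :
    (F '' {x : List X | x.length = m + 1} ⊆
        ⋃ k ≤ m, F '' {x : List X | x.length = k}) ↔
      Set.range F = ⋃ k ≤ m, F '' {x : List X | x.length = k} := by
  have hF : ∀ x y y' : List X, y.length ≤ m → F y = F y' → F (x ++ y) = F (x ++ y') :=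
    fun x y y' hy hFy => by simpa using hP x [] y hy y' hFy
  rw [List.biUnion_image_length_eq]
  refine ⟨fun h => ?_, fun h => h ▸ Set.image_subset_range _ _⟩
  exact (List.range_subset_image_length_le hF h).antisymm (Set.image_subset_range _ _)

theorem stmt_17 {X Y : Type*} [Nonempty Y] (m : ℕ) (F : List X → Y)
    (hP : ∀ x z : List X, ∀ y : List X, y.length ≤ m → ∀ y' : List X,
      F y = F y' → F (x ++ y ++ z) = F (x ++ y' ++ z)) :
    (F '' {x : List X | x.length = m + 1} ⊆
        ⋃ k ≤ m, F '' {x : List X | x.length = k}) ↔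
      Set.range F = ⋃ k ≤ m, F '' {x : List X | x.length = k} :=
  stmt_17_general m F hP
end

section
/- Let D ⊆ X* be nonempty such that xDz ⊆ D for all x, z ∈ X*, and let F : D → X* be in A⁰_D with F(D) ⊆ D. Then the function G : X* → X* defined by G = F on D and G = identity on X* \ D belongs to A_D. -/
theorem stmt_18_general {X : Type*} (D : Set (List X))
    (hclosed : ∀ x z : List X, ∀ y ∈ D, x ++ y ++ z ∈ D)
    (F : List X → List X) (hFD : F '' D ⊆ D)
    (hA0 : ∀ x z y : List X, x ++ y ++ z ∈ D → y ∈ D → x ++ F y ++ z ∈ D →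
      F (x ++ y ++ z) = F (x ++ F y ++ z))
    (G : List X → List X) (hG1 : ∀ x ∈ D, G x = F x) :
    ∀ x z : List X, ∀ y ∈ D, G (x ++ y ++ z) = G (x ++ G y ++ z) := by
  intro x z y hy
  have hxyz : x ++ y ++ z ∈ D := hclosed x z y hy
  have hxFyz : x ++ F y ++ z ∈ D := hclosed x z (F y) (hFD ⟨y, hy, rfl⟩)
  rw [hG1 y hy, hG1 _ hxyz, hG1 _ hxFyz, hA0 x z y hxyz hy hxFyz]

theorem stmt_18 {X : Type*} (D : Set (List X)) (hD : D.Nonempty)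
    (hclosed : ∀ x z : List X, ∀ y ∈ D, x ++ y ++ z ∈ D)
    (F : List X → List X) (hFD : F '' D ⊆ D)
    (hA0 : ∀ x z y : List X, x ++ y ++ z ∈ D → y ∈ D → x ++ F y ++ z ∈ D →
      F (x ++ y ++ z) = F (x ++ F y ++ z))
    (G : List X → List X) (hG1 : ∀ x ∈ D, G x = F x) (hG2 : ∀ x ∉ D, G x = x) :
    ∀ x z : List X, ∀ y ∈ D, G (x ++ y ++ z) = G (x ++ G y ++ z) :=
  stmt_18_general D hclosed F hFD hA0 G hG1
end
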